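/- If p < q, then lim_{s→0+} Ĝ(y,s) = (y + q/β)/(q − p). (Consequently, in open ASEP with ejection rate β and no injection and p < q, a single particle started at y is eventually ejected with probability one, and the expected ejection time is (y + q/β)/(q − p).) -/

import Mathlib

open Filter Topology
noncomputable section

/-- `ξ₊(s)`, the solution of `ε(ξ) = s` with the positive square root, where
`ε(ξ) = pξ⁻¹ + qξ - 1`. -/
def xiPlus (p q s : ℝ) : ℝ := (s + 1 + Real.sqrt ((s + 1) ^ 2 - 4 * p * q)) / (2 * q)

/-- The Laplace transform `Ĝ(y,s) = (1/s)[1 - β ξ₊(s)^{-y}/(q(ξ₊(s)-1) + β)]` of the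
probability that, in ASEP on `ℤ⁺` with ejection rate `β` at the boundary and no injection,
a single particle started at `y` has not yet been ejected at time `t`. -/
def Ghat (p q β : ℝ) (y : ℕ) (s : ℝ) : ℝ :=
  (1 / s) * (1 - β * xiPlus p q s ^ (-(y : ℤ)) / (q * (xiPlus p q s - 1) + β))

/-!
Write `Ĝ(y,s) = (1 - F(s))/s` with `F(s) = β ξ₊(s)^{-y}/(q(ξ₊(s) - 1) + β)`. When `p < q` the
discriminant at `s = 0` is `(q - p)²`, so `ξ₊(0) = 1` and `F(0) = 1`; hence the limit is
`-F'(0)`, and the chain rule with `ξ₊'(0) = 1/(q - p)` gives `F'(0) = -(y + q/β)/(q - p)`.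
-/

theorem tendsto_inv_mul_one_sub_of_hasDerivAt {f : ℝ → ℝ} {d : ℝ} (h0 : f 0 = 1)
    (hf : HasDerivAt f d 0) :
    Tendsto (fun s => (1 / s) * (1 - f s)) (𝓝[≠] 0) (𝓝 (-d)) := by
  have hslope := (hasDerivAt_iff_tendsto_slope.mp hf).neg
  convert hslope using 2 with s
  rw [slope_def_field, h0, sub_zero]
  ring

theorem hasDerivAt_xiPlus {p q s : ℝ} (hD : (s + 1) ^ 2 - 4 * p * q ≠ 0) :
    HasDerivAt (xiPlus p q)
      ((1 + (s + 1) / Real.sqrt ((s + 1) ^ 2 - 4 * p * q)) / (2 * q)) s := by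
  have hD' : HasDerivAt (fun t : ℝ => (t + 1) ^ 2 - 4 * p * q) (2 * (s + 1)) s := by
    simpa using (((hasDerivAt_id' s).add_const 1).pow 2).sub_const (4 * p * q)
  have h := (((hasDerivAt_id' s).add_const 1).add (hD'.sqrt hD)).div_const (2 * q)
  rwa [mul_div_mul_left _ _ two_ne_zero] at h

theorem discr_zero_eq_sq {p q : ℝ} (hpq : p + q = 1) : (0 + 1) ^ 2 - 4 * p * q = (q - p) ^ 2 := by
  rw [← hpq]
  ring

theorem sqrt_discr_zero {p q : ℝ} (hpq : p + q = 1) (hle : p ≤ q) :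
    Real.sqrt ((0 + 1) ^ 2 - 4 * p * q) = q - p := by
  rw [discr_zero_eq_sq hpq, Real.sqrt_sq (sub_nonneg.mpr hle)]

theorem xiPlus_zero {p q : ℝ} (hpq : p + q = 1) (hle : p ≤ q) : xiPlus p q 0 = 1 := by
  rw [xiPlus, sqrt_discr_zero hpq hle, div_eq_one_iff_eq (by linarith)]
  linarith

theorem hasDerivAt_xiPlus_zero {p q : ℝ} (hpq : p + q = 1) (hlt : p < q) :
    HasDerivAt (xiPlus p q) (1 / (q - p)) 0 := by
  have hqp : q - p ≠ 0 := (sub_pos.mpr hlt).ne'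
  have hD : (0 + 1) ^ 2 - 4 * p * q ≠ 0 := by
    rw [discr_zero_eq_sq hpq]
    exact pow_ne_zero 2 hqp
  convert hasDerivAt_xiPlus hD using 1
  rw [sqrt_discr_zero hpq hlt.le]
  have hq : q ≠ 0 := by linarith
  field_simp
  linarith

theorem hasDerivAt_ejection {g : ℝ → ℝ} {g' x : ℝ} (q β : ℝ) (y : ℕ) (hβ : β ≠ 0)
    (hx : g x = 1) (hg : HasDerivAt g g' x) :
    HasDerivAt (fun s => β * g s ^ (-(y : ℤ)) / (q * (g s - 1) + β))
      (-((y + q / β) * g')) x := by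
  have hnum := ((hasDerivAt_zpow (-(y : ℤ)) (g x) (Or.inl (by simp [hx]))).comp x hg).const_mul β
  have hden := ((hg.sub_const 1).const_mul q).add_const β
  refine (hnum.div hden (by simp [hx, hβ])).congr_deriv ?_
  simp only [Function.comp_apply, hx, one_zpow, sub_self, mul_zero, zero_add, mul_one]
  field_simp
  push_cast
  ring

theorem expected_ejection_time_p_lt_q_general
    (p q β : ℝ) (hpq : p + q = 1) (hβ : 0 < β) (y : ℕ)
    (hpq' : p < q) :
    Tendsto (fun s => Ghat p q β y s) (𝓝[>] (0:ℝ))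
      (𝓝 ((y + q / β) / (q - p))) := by
  have hxi0 := xiPlus_zero hpq hpq'.le
  have hF := hasDerivAt_ejection q β y hβ.ne' hxi0 (hasDerivAt_xiPlus_zero hpq hpq')
  have hlim := (tendsto_inv_mul_one_sub_of_hasDerivAt (by simp [hxi0, hβ.ne']) hF).mono_left
    (nhdsGT_le_nhdsNE 0)
  rwa [neg_neg, mul_one_div] at hlim

/-- Tracy–Widom, expected ejection time of a single particle in open ASEP with ejection
only, `p < q`: `lim_{s→0⁺} Ĝ(y,s) = (y + q/β)/(q - p)` (so the particle is eventually
ejected with probability one, with expected ejection time `(y + q/β)/(q - p)`). -/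
theorem expected_ejection_time_p_lt_q
    (p q β : ℝ) (hp : 0 < p) (hq : 0 < q) (hpq : p + q = 1) (hβ : 0 < β) (y : ℕ)
    (hpq' : p < q) :
    Tendsto (fun s => Ghat p q β y s) (𝓝[>] (0:ℝ))
      (𝓝 ((y + q / β) / (q - p))) :=
  expected_ejection_time_p_lt_q_general p q β hpq hβ y hpq'
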